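/- Let k ≥ 1 be an integer with 3k ≤ n, and set m = 2k. Then ε_k + ε_{3k} is a root of D_{n+1} of height 2m which is not the sum of two roots of height m, and every positive root of D_{n+1} whose height is divisible by m can be written as a sum of elements of R_m ∪ {ε_k + ε_{3k}}. -/

import Mathlib

/-!
The positive roots are `ε_j - ε_i` and `ε_j + ε_i` with `i < j`, of heights `j - i` and
`j + i`. A difference of height divisible by `2k` telescopes into differences
`ε_{a+2k} - ε_a ∈ R_{2k}`. Modulo such differences, a sum `ε_j + ε_i` with `2k ∣ i + j` can be
lowered to `ε_t + ε_r`, where `r, t` are the residues of `i, j` mod `2k`, so `r + t ∈ {0, 2k}`.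
If `r ≠ t` this is in `R_{2k}`; if `r = t = 0` one lowers instead to `ε_{2k} + ε_0 ∈ R_{2k}`;
if `r = t = k`, then `i < j` are both `≡ k`, so `j ≥ 3k` and one lowers to `ε_{3k} + ε_k`.
That `ε_k + ε_{3k}` is not a sum of two roots of height `2k` is seen on its coordinates `k`
and `3k`.
-/

noncomputable section

/-- The standard basis vector `ε_i` of `ℝ^{n+1}` (indices `0, 1, …, n`). -/
def eps (N : ℕ) (i : Fin N) : Fin N → ℝ := fun j => if j = i then 1 else 0

/-- The root system of type `D_{n+1}`. -/
def Droots (n : ℕ) : Set (Fin (n + 1) → ℝ) :=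
  {v | ∃ i j : Fin (n + 1), i < j ∧
        (v = eps (n + 1) j - eps (n + 1) i ∨ v = -(eps (n + 1) j - eps (n + 1) i) ∨
         v = eps (n + 1) j + eps (n + 1) i ∨ v = -(eps (n + 1) j + eps (n + 1) i))}

/-- The height functional for type `D_{n+1}`. -/
def htD (n : ℕ) (v : Fin (n + 1) → ℝ) : ℝ := ∑ i : Fin (n + 1), v i * (i : ℝ)

/-- `ε_a` indexed by a natural number; it is the zero vector when `a > n`. -/
def epsNat (n a : ℕ) : Fin (n + 1) → ℝ := fun j => if (j : ℕ) = a then 1 else 0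

def rootsOfHeight (n : ℕ) (h : ℝ) : Set (Fin (n + 1) → ℝ) := {u ∈ Droots n | htD n u = h}

section

variable {n : ℕ}

lemma eps_eq_epsNat (i : Fin (n + 1)) : eps (n + 1) i = epsNat n i := by
  ext j
  simp [eps, epsNat, Fin.ext_iff]

lemma htD_add (u v : Fin (n + 1) → ℝ) : htD n (u + v) = htD n u + htD n v := by
  simp [htD, add_mul, Finset.sum_add_distrib]

lemma htD_sub (u v : Fin (n + 1) → ℝ) : htD n (u - v) = htD n u - htD n v := by
  simp [htD, sub_mul, Finset.sum_sub_distrib]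

lemma htD_neg (u : Fin (n + 1) → ℝ) : htD n (-u) = -htD n u := by
  simp [htD]

lemma htD_epsNat {a : ℕ} (ha : a ≤ n) : htD n (epsNat n a) = a := by
  rw [htD, Finset.sum_eq_single (⟨a, by omega⟩ : Fin (n + 1))] <;>
    simp +contextual [epsNat, Fin.ext_iff]

lemma epsNat_sub_mem_Droots {a b : ℕ} (hab : a < b) (hb : b ≤ n) :
    epsNat n b - epsNat n a ∈ Droots n :=
  ⟨⟨a, by omega⟩, ⟨b, by omega⟩, hab, Or.inl (by simp only [eps_eq_epsNat])⟩

lemma epsNat_add_mem_Droots {a b : ℕ} (hab : a ≠ b) (ha : a ≤ n) (hb : b ≤ n) :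
    epsNat n a + epsNat n b ∈ Droots n := by
  rcases hab.lt_or_gt with h | h
  · exact ⟨⟨a, by omega⟩, ⟨b, by omega⟩, h,
      Or.inr (Or.inr (Or.inl (by simp only [eps_eq_epsNat]; exact add_comm _ _)))⟩
  · exact ⟨⟨b, by omega⟩, ⟨a, by omega⟩, h,
      Or.inr (Or.inr (Or.inl (by simp only [eps_eq_epsNat])))⟩

lemma epsNat_sub_mem_rootsOfHeight {a m : ℕ} (hm : 0 < m) (ha : a + m ≤ n) :
    epsNat n (a + m) - epsNat n a ∈ rootsOfHeight n m := by
  refine ⟨epsNat_sub_mem_Droots (by omega) ha, ?_⟩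
  rw [htD_sub, htD_epsNat ha, htD_epsNat (by omega)]
  push_cast
  ring

lemma epsNat_add_mem_rootsOfHeight {a b m : ℕ} (hab : a ≠ b) (hm : a + b = m) (ha : a ≤ n)
    (hb : b ≤ n) : epsNat n a + epsNat n b ∈ rootsOfHeight n m := by
  refine ⟨epsNat_add_mem_Droots hab ha hb, ?_⟩
  rw [htD_add, htD_epsNat ha, htD_epsNat hb, ← hm]
  push_cast
  ring

lemma exists_epsNat_of_mem_Droots {v : Fin (n + 1) → ℝ} (hv : v ∈ Droots n)
    (hpos : 0 < htD n v) :
    ∃ a b : ℕ, a < b ∧ b ≤ n ∧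
      (v = epsNat n b - epsNat n a ∨ v = epsNat n b + epsNat n a) := by
  obtain ⟨i, j, hij, hv⟩ := hv
  have hlt : (i : ℝ) < j := by exact_mod_cast hij
  simp only [eps_eq_epsNat] at hv
  refine ⟨i, j, hij, j.is_le, ?_⟩
  rcases hv with hv | rfl | hv | rfl
  · exact Or.inl hv
  · rw [htD_neg, htD_sub, htD_epsNat j.is_le, htD_epsNat i.is_le] at hpos
    linarith
  · exact Or.inr hv
  · rw [htD_neg, htD_add, htD_epsNat j.is_le, htD_epsNat i.is_le] at hpos
    linarith

lemma exists_epsNat_of_mem_rootsOfHeight {m : ℕ} (hm : 0 < m) {v : Fin (n + 1) → ℝ}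
    (hv : v ∈ rootsOfHeight n m) :
    ∃ a b : ℕ, a < b ∧ b ≤ n ∧
      (v = epsNat n b - epsNat n a ∧ b = a + m ∨
        v = epsNat n b + epsNat n a ∧ a + b = m) := by
  obtain ⟨hv, hht⟩ := hv
  obtain ⟨a, b, hab, hb, rfl | rfl⟩ :=
    exists_epsNat_of_mem_Droots hv (by rw [hht]; exact_mod_cast hm)
  · rw [htD_sub, htD_epsNat hb, htD_epsNat (by omega)] at hht
    exact ⟨a, b, hab, hb, Or.inl ⟨rfl, by exact_mod_cast (by linarith : (b : ℝ) = a + m)⟩⟩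
  · rw [htD_add, htD_epsNat hb, htD_epsNat (by omega)] at hht
    exact ⟨a, b, hab, hb, Or.inr ⟨rfl, by exact_mod_cast (by linarith : (a + b : ℝ) = m)⟩⟩

theorem epsNat_add_epsNat_three_mul_ne_add {k : ℕ} (hk : 1 ≤ k) (h3k : 3 * k ≤ n)
    {u v : Fin (n + 1) → ℝ} (hu : u ∈ rootsOfHeight n (2 * k : ℕ))
    (hv : v ∈ rootsOfHeight n (2 * k : ℕ)) :
    epsNat n k + epsNat n (3 * k) ≠ u + v := by
  obtain ⟨a, b, hab, -, hu⟩ := exists_epsNat_of_mem_rootsOfHeight (by omega) hu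
  obtain ⟨c, d, hcd, -, hv⟩ := exists_epsNat_of_mem_rootsOfHeight (by omega) hv
  intro h
  have hk' := congrFun h ⟨k, by omega⟩
  have h3k' := congrFun h ⟨3 * k, by omega⟩
  rcases hu with ⟨rfl, hab'⟩ | ⟨rfl, hab'⟩ <;> rcases hv with ⟨rfl, hcd'⟩ | ⟨rfl, hcd'⟩ <;>
    simp (disch := omega) only [Pi.add_apply, Pi.sub_apply, epsNat, if_neg, if_true]
      at hk' h3k' <;>
    (try split_ifs at hk' h3k') <;> linarith

lemma epsNat_sub_mem_closure {m a b : ℕ} (hm : 0 < m) (hab : a ≤ b) (hb : b ≤ n)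
    (h : a ≡ b [MOD m]) :
    epsNat n b - epsNat n a ∈ AddSubmonoid.closure (rootsOfHeight n m) := by
  obtain ⟨l, rfl⟩ : ∃ l, b = a + m * l := by
    obtain ⟨l, hl⟩ := (Nat.modEq_iff_dvd' hab).mp h
    exact ⟨l, by omega⟩
  clear hab h
  induction l with
  | zero => simp
  | succ l ih =>
    rw [Nat.mul_succ, ← add_assoc] at hb ⊢
    rw [← sub_add_sub_cancel _ (epsNat n (a + m * l))]
    exact add_mem (AddSubmonoid.subset_closure (epsNat_sub_mem_rootsOfHeight hm hb))
      (ih (by omega))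

lemma epsNat_add_mem_closure {k i j : ℕ} (hk : 1 ≤ k) (hij : i < j) (hj : j ≤ n)
    (hdvd : 2 * k ∣ i + j) :
    epsNat n j + epsNat n i ∈
      AddSubmonoid.closure (rootsOfHeight n (2 * k : ℕ) ∪ {epsNat n k + epsNat n (3 * k)}) := by
  set S := AddSubmonoid.closure (rootsOfHeight n (2 * k : ℕ) ∪ {epsNat n k + epsNat n (3 * k)})
  have hR : AddSubmonoid.closure (rootsOfHeight n (2 * k : ℕ)) ≤ S :=
    AddSubmonoid.closure_mono Set.subset_union_left
  suffices ∃ a b, a ≤ i ∧ b ≤ j ∧ a ≡ i [MOD 2 * k] ∧ b ≡ j [MOD 2 * k] ∧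
      epsNat n a + epsNat n b ∈ S by
    obtain ⟨a, b, hai, hbj, ha, hb, hS⟩ := this
    have := add_mem (add_mem (hR (epsNat_sub_mem_closure (by omega) hbj hj hb))
      (hR (epsNat_sub_mem_closure (by omega) hai (by omega) ha))) hS
    convert this using 1
    abel
  set r := i % (2 * k)
  set t := j % (2 * k)
  have hri : r ≡ i [MOD 2 * k] := Nat.mod_modEq i _
  have htj : t ≡ j [MOD 2 * k] := Nat.mod_modEq j _
  have hr : r ≤ i := Nat.mod_le i _
  have ht : t ≤ j := Nat.mod_le j _
  have hr2 : r < 2 * k := Nat.mod_lt i (by omega)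
  have ht2 : t < 2 * k := Nat.mod_lt j (by omega)
  obtain ⟨c, hc⟩ : 2 * k ∣ r + t :=
    Nat.modEq_zero_iff_dvd.mp ((hri.add htj).trans (Nat.modEq_zero_iff_dvd.mpr hdvd))
  have hc2 : c < 2 := by nlinarith
  have hgap : r = t → i + 2 * k ≤ j := fun h => (hri.symm.trans (h ▸ htj)).add_le_of_lt hij
  interval_cases c
  · have hr0 : r = 0 := by omega
    have ht0 : t = 0 := by omega
    have h2k : 2 * k ≡ 0 [MOD 2 * k] := by simp [Nat.ModEq]
    refine ⟨0, 2 * k, by omega, by omega, hr0 ▸ hri, h2k.trans (ht0 ▸ htj),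
      AddSubmonoid.subset_closure (Or.inl ?_)⟩
    exact epsNat_add_mem_rootsOfHeight (by omega) (by omega) (by omega) (by omega)
  · by_cases hrt : r = t
    · have hrk : r = k := by omega
      have h3k : k + 2 * k ≡ k [MOD 2 * k] := Nat.add_modEq_right
      rw [show k + 2 * k = 3 * k by ring] at h3k
      refine ⟨k, 3 * k, by omega, by omega, hrk ▸ hri, h3k.trans ((hrt ▸ hrk) ▸ htj),
        AddSubmonoid.subset_closure (Or.inr rfl)⟩
    · exact ⟨r, t, hr, ht, hri, htj, AddSubmonoid.subset_closure
        (Or.inl (epsNat_add_mem_rootsOfHeight hrt (by omega) (by omega) (by omega)))⟩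

theorem mem_closure_of_dvd_htD {k : ℕ} (hk : 1 ≤ k) {v : Fin (n + 1) → ℝ}
    (hv : v ∈ Droots n) (hpos : 0 < htD n v) (hdvd : ∃ l : ℤ, htD n v = ((2 * k : ℕ) : ℝ) * l) :
    v ∈ AddSubmonoid.closure
      (rootsOfHeight n (2 * k : ℕ) ∪ {epsNat n k + epsNat n (3 * k)}) := by
  obtain ⟨l, hl⟩ := hdvd
  obtain ⟨a, b, hab, hb, rfl | rfl⟩ := exists_epsNat_of_mem_Droots hv hpos
  · rw [htD_sub, htD_epsNat hb, htD_epsNat (by omega)] at hl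
    have hmod : a ≡ b [MOD 2 * k] := Nat.modEq_iff_dvd.mpr ⟨l, by exact_mod_cast hl⟩
    exact AddSubmonoid.closure_mono Set.subset_union_left
      (epsNat_sub_mem_closure (by omega) hab.le hb hmod)
  · rw [htD_add, htD_epsNat hb, htD_epsNat (by omega)] at hl
    have hdvd : ((2 * k : ℕ) : ℤ) ∣ ((a + b : ℕ) : ℤ) :=
      ⟨l, by rw [add_comm]; exact_mod_cast hl⟩
    exact epsNat_add_mem_closure hk hab hb (Int.natCast_dvd_natCast.mp hdvd)

end

/-- let `n ≥ 3`, `k ≥ 1` with `3k ≤ n`, and `m = 2k`. Then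
`ε_k + ε_{3k}` is a root of `D_{n+1}` of height `2m` which is not the sum of two roots
of height `m`, and every positive root of `D_{n+1}` whose height is divisible by `m`
is a sum of elements of `R_m ∪ {ε_k + ε_{3k}}`. -/
theorem stmt9 (n k : ℕ) (hk : 1 ≤ k) (h3k : 3 * k ≤ n) :
    let m : ℕ := 2 * k
    let δ : Fin (n + 1) → ℝ :=
      eps (n + 1) ⟨k, by omega⟩ + eps (n + 1) ⟨3 * k, by omega⟩
    δ ∈ Droots n ∧ htD n δ = (2 * m : ℕ) ∧
    (¬ ∃ a b : Fin (n + 1) → ℝ, a ∈ Droots n ∧ htD n a = (m : ℝ) ∧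
        b ∈ Droots n ∧ htD n b = (m : ℝ) ∧ δ = a + b) ∧
    (∀ v ∈ Droots n, 0 < htD n v → (∃ l : ℤ, htD n v = (m : ℝ) * l) →
      v ∈ AddSubmonoid.closure ({u ∈ Droots n | htD n u = (m : ℝ)} ∪ {δ})) := by
  intro m δ
  have hδ : δ = epsNat n k + epsNat n (3 * k) := by simp only [δ, eps_eq_epsNat]
  rw [hδ]
  refine ⟨epsNat_add_mem_Droots (by omega) (by omega) h3k, ?_, ?_,
    fun v hv hpos hdvd => mem_closure_of_dvd_htD hk hv hpos hdvd⟩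
  · rw [htD_add, htD_epsNat (by omega), htD_epsNat h3k]
    push_cast [m]
    ring
  · rintro ⟨u, v, hu, htu, hv, htv, h⟩
    exact epsNat_add_epsNat_three_mul_ne_add hk h3k ⟨hu, htu⟩ ⟨hv, htv⟩ h
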